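/- arXiv:1408.2784 — 7 statements merged into one kernel-verified Lean document; each statement's English description precedes it below -/
import Mathlib

section
/- In any semigroup satisfying the law xyxzxyx = xyzyx (for all x,y,z), the binary operation t(x,y) = xyx is associative, i.e. t(x, t(y,z)) = t(t(x,y), z) for all x,y,z. -/
/-- t(x,y) = x*y*x -/
def t0 {S : Type*} [Semigroup S] (x y : S) : S := x * y * x

theorem stmt_0 {S : Type*} [Semigroup S]
    (h : ∀ x y z : S, x * y * x * z * (x * y * x) = x * y * z * y * x) :
    ∀ x y z : S, t0 x (t0 y z) = t0 (t0 x y) z := by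
  intro x y z
  simp only [t0]
  rw [h x y z]
  simp [mul_assoc]
end

section
/- In any semigroup satisfying x^2 y^2 z = x^2 y x^2 y z (for all x,y,z), the binary operation t(x,y) = x^2 y is associative: t(x, t(y,z)) = t(t(x,y), z) for all x,y,z. -/
/-- t(x,y) = x^2 y -/
def t2 {S : Type*} [Semigroup S] (x y : S) : S := x * x * y

theorem stmt_2 {S : Type*} [Semigroup S]
    (h : ∀ x y z : S, x * x * (y * y) * z = x * x * y * (x * x) * y * z) :
    ∀ x y z : S, t2 x (t2 y z) = t2 (t2 x y) z := by
  intro x y z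
  have := h x y z
  simp only [t2, mul_assoc] at *
  exact this
end

section
/- In any semigroup satisfying x y^2 z^2 = x y z^2 y z^2 (for all x,y,z), the binary operation t(x,y) = x y^2 is associative: t(x, t(y,z)) = t(t(x,y), z) for all x,y,z. -/
/-- t(x,y) = x y^2 -/
def t3 {S : Type*} [Semigroup S] (x y : S) : S := x * y * y

theorem stmt_3 {S : Type*} [Semigroup S]
    (h : ∀ x y z : S, x * (y * y) * (z * z) = x * y * (z * z) * y * (z * z)) :
    ∀ x y z : S, t3 x (t3 y z) = t3 (t3 x y) z := by
  intro x y z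
  have := h x y z
  simp only [t3, mul_assoc] at this ⊢
  exact this.symm
end

section
/- In any semigroup satisfying x^2 y^2 z = x^2 y x^2 y z for all x,y,z, the identity x^2 y^2 x^2 z = x^2 y^2 x^4 z holds for all x,y,z. -/
theorem stmt_4 {S : Type*} [Semigroup S]
    (h : ∀ x y z : S, x * x * (y * y) * z = x * x * y * (x * x) * y * z) :
    ∀ x y z : S,
      x * x * (y * y) * (x * x) * z = x * x * (y * y) * (x * x * x * x) * z := by
  intro x y z
  have h' : ∀ a b c : S, a * (a * (b * (b * c))) = a * (a * (b * (a * (a * (b * c))))) := by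
    intro a b c; have := h a b c; simpa [mul_assoc] using this
  have key : x * (x * (y * (y * (x * (x * (z)))))) = x * (x * (y * (y * (x * (x * (x * (x * (z)))))))) := by
    calc x * (x * (y * (y * (x * (x * (z))))))
      _ = x * (x * (y * (y * (x * (y * (y * (x * (z)))))))) := by
          have e := (h' (y) (x) z)
          rw [e]
      _ = x * (x * (y * (y * (x * (x * (x * (y * (y * (x * (z)))))))))) := by
          have e := (h' (x) (y * y * x) z)
          simp only [mul_assoc] at e ⊢; rw [e]
      _ = x * (x * (y * (y * (x * (y * (y * (x * (x * (y * (y * (x * (z)))))))))))) := by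
          have e := (h' (y) (x) (x * y * y * x * z))
          simp only [mul_assoc] at e ⊢; rw [e]
      _ = x * (x * (y * (y * (x * (y * (y * (x * (y * (y * (x * (y * (y * (x * (z)))))))))))))) := by
          have e := (h' (y) (x * y * y * x) z)
          simp only [mul_assoc] at e ⊢; rw [e]
      _ = x * (x * (y * (y * (x * (x * (y * (y * (x * (y * (y * (x * (z)))))))))))) := by
          have e := (h' (y) (x) (y * y * x * y * y * x * z)).symm
          simp only [mul_assoc] at e ⊢; rw [e]
      _ = x * (x * (y * (y * (x * (x * (y * (y * (x * (x * (z)))))))))) := by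
          have e := (h' (y) (x) z).symm
          rw [e]
      _ = x * (x * (y * (y * (x * (x * (x * (x * (z)))))))) := by
          have e := (h' (y) (x * x) z).symm
          simp only [mul_assoc] at e ⊢; rw [e]
  simpa [mul_assoc] using key
end

section
/- In any semigroup satisfying x^2 y^2 z = x^2 y x^2 y z for all x,y,z, the identity x^2 y^b z = (x^2 y)^b z holds for all x,y,z and all integers b ≥ 1. -/
/-- `spow s n = s^(n+1)`: the (n+1)-fold product of `s` with itself. -/
def spow {S : Type*} [Semigroup S] (s : S) : ℕ → S
  | 0 => s
  | n + 1 => spow s n * s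

lemma spow_comm {S : Type*} [Semigroup S] (s : S) : ∀ n, s * spow s n = spow s n * s
  | 0 => rfl
  | n + 1 => by rw [spow, ← mul_assoc, spow_comm s n]

/-- x^2 y^b z = (x^2 y)^b z for all b ≥ 1 (here b = n+1). -/
theorem stmt_5 {S : Type*} [Semigroup S]
    (h : ∀ x y z : S, x * x * (y * y) * z = x * x * y * (x * x) * y * z) :
    ∀ (x y z : S) (n : ℕ), x * x * spow y n * z = spow (x * x * y) n * z := by
  intro x y z n
  induction n generalizing z with
  | zero => rfl
  | succ n ih =>
    cases n with
    | zero =>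
      simpa [spow, mul_assoc] using h x y z
    | succ m =>
      have e1 : spow y (m + 2) = y * (y * spow y m) := by
        rw [spow, spow, ← spow_comm, mul_assoc, ← spow_comm]
      have e2 : x * x * spow y (m + 2) * z = x * x * (y * y) * (spow y m * z) := by
        rw [e1]; simp [mul_assoc]
      rw [e2, h x y (spow y m * z)]
      have e3 : x * x * y * (x * x) * y * (spow y m * z)
          = (x * x * y) * (x * x * spow y (m + 1) * z) := by
        simp [spow, ← spow_comm, mul_assoc]
      rw [e3, ih]
      conv_rhs => rw [spow, ← spow_comm]
      simp [mul_assoc]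
end

section
/- The Thue–Morse-type infinite word on three letters is squarefree: there exists an infinite word w over a three-letter alphabet such that no nonempty finite word u satisfies that uu occurs as a factor of w. -/
/-- `u` occurs as a factor of the infinite word `w` starting at position `i`. -/
def FactorAt {A : Type*} (w : ℕ → A) (u : List A) (i : ℕ) : Prop :=
  (List.range u.length).map (fun k => w (i + k)) = u

/-- The Thue–Morse sequence. -/
def tm (n : ℕ) : Bool :=
  if h : n = 0 then false
  else xor (tm (n / 2)) (n % 2 == 1)
decreasing_by exact Nat.div_lt_self (Nat.pos_of_ne_zero h) one_lt_two

lemma tm_two_mul (n : ℕ) : tm (2 * n) = tm n := by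
  rcases Nat.eq_zero_or_pos n with h | h
  · subst h; rfl
  · rw [tm]
    rw [dif_neg (by omega : 2 * n ≠ 0)]
    simp [Nat.mul_div_cancel_left, Nat.mul_mod_right]

lemma tm_two_mul_add_one (n : ℕ) : tm (2 * n + 1) = !tm n := by
  rw [tm]
  simp [Nat.mul_add_div, Nat.mul_add_mod, Bool.xor_true]

lemma no_three (n : ℕ) (h1 : tm n = tm (n + 1)) (h2 : tm (n + 1) = tm (n + 2)) : False := by
  rcases Nat.even_or_odd n with ⟨m, hm⟩ | ⟨m, hm⟩
  · subst hm
    rw [(by ring : m + m = 2 * m), (by ring : 2 * m + 1 = 2 * m + 1), tm_two_mul,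
      tm_two_mul_add_one] at h1
    simp at h1
  · subst hm
    rw [(by ring : 2 * m + 1 + 1 = 2 * (m + 1)), (by ring : 2 * m + 1 + 2 = 2 * (m + 1) + 1),
      tm_two_mul, tm_two_mul_add_one] at h2
    simp at h2

/-- The Thue–Morse sequence is overlap-free. -/
lemma no_overlap : ∀ L, 1 ≤ L → ∀ i, ¬ (∀ k ≤ L, tm (i + k) = tm (i + k + L)) := by
  intro L
  induction L using Nat.strong_induction_on with
  | _ L IH =>
    intro hL i H
    rcases Nat.even_or_odd L with ⟨M, hM⟩ | ⟨M, hM⟩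
    · -- L = 2M even, reduce
      have hM1 : 1 ≤ M := by omega
      have hL2 : L = 2 * M := by omega
      subst hL2
      rcases Nat.even_or_odd i with ⟨a, ha⟩ | ⟨a, ha⟩
      · have ha2 : i = 2 * a := by omega
        subst ha2
        refine IH M (by omega) hM1 a (fun k hk => ?_)
        have h := H (2 * k) (by omega)
        rw [(by ring : 2 * a + 2 * k = 2 * (a + k)),
          (by ring : 2 * (a + k) + 2 * M = 2 * (a + k + M)), tm_two_mul, tm_two_mul] at h
        exact h
      · have ha2 : i = 2 * a + 1 := by omega
        subst ha2
        refine IH M (by omega) hM1 a (fun k hk => ?_)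
        have h := H (2 * k) (by omega)
        rw [(by ring : 2 * a + 1 + 2 * k = 2 * (a + k) + 1),
          (by ring : 2 * (a + k) + 1 + 2 * M = 2 * (a + k + M) + 1),
          tm_two_mul_add_one, tm_two_mul_add_one] at h
        simpa using h
    · -- L = 2M + 1 odd
      have hL2 : L = 2 * M + 1 := by omega
      subst hL2
      rcases Nat.eq_zero_or_pos M with hM0 | hM1
      · -- L = 1
        subst hM0
        have h0 := H 0 (by omega)
        have h1 := H 1 (by omega)
        norm_num at h0 h1
        exact no_three i h0 (by rw [show i + 1 + 1 = i + 2 from rfl] at h1; exact h1)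
      · -- L ≥ 3
        rcases Nat.even_or_odd i with ⟨m, hm⟩ | ⟨m, hm⟩
        · have hm2 : i = 2 * m := by omega
          subst hm2
          have h0 := H 0 (by omega)
          have h1 := H 1 (by omega)
          have h2 := H 2 (by omega)
          have h3 := H 3 (by omega)
          rw [(by ring : 2 * m + 0 = 2 * m), (by ring : 2 * m + (2 * M + 1) = 2 * (m + M) + 1),
            tm_two_mul, tm_two_mul_add_one] at h0
          rw [(by ring : 2 * m + 1 + (2 * M + 1) = 2 * (m + M + 1)),
            tm_two_mul_add_one, tm_two_mul] at h1
          rw [(by ring : 2 * m + 2 = 2 * (m + 1)),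
            (by ring : 2 * (m + 1) + (2 * M + 1) = 2 * (m + M + 1) + 1),
            tm_two_mul, tm_two_mul_add_one] at h2
          rw [(by ring : 2 * m + 3 = 2 * (m + 1) + 1),
            (by ring : 2 * (m + 1) + 1 + (2 * M + 1) = 2 * (m + M + 2)),
            tm_two_mul_add_one, tm_two_mul] at h3
          refine no_three (m + M) ?_ ?_
          · cases h : tm m <;> simp_all
          · cases h : tm (m + 1) <;> simp_all
        · have hm2 : i = 2 * m + 1 := by omega
          subst hm2
          have h0 := H 0 (by omega)
          have h1 := H 1 (by omega)
          have h2 := H 2 (by omega)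
          have h3 := H 3 (by omega)
          rw [(by ring : 2 * m + 1 + 0 = 2 * m + 1),
            (by ring : 2 * m + 1 + (2 * M + 1) = 2 * (m + M + 1)),
            tm_two_mul_add_one, tm_two_mul] at h0
          rw [(by ring : 2 * m + 1 + 1 = 2 * (m + 1)),
            (by ring : 2 * (m + 1) + (2 * M + 1) = 2 * (m + M + 1) + 1),
            tm_two_mul, tm_two_mul_add_one] at h1
          rw [(by ring : 2 * m + 1 + 2 = 2 * (m + 1) + 1),
            (by ring : 2 * (m + 1) + 1 + (2 * M + 1) = 2 * (m + M + 2)),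
            tm_two_mul_add_one, tm_two_mul] at h2
          rw [(by ring : 2 * m + 1 + 3 = 2 * (m + 2)),
            (by ring : 2 * (m + 2) + (2 * M + 1) = 2 * (m + M + 2) + 1),
            tm_two_mul, tm_two_mul_add_one] at h3
          refine no_three m ?_ ?_
          · cases h : tm (m + M + 1) <;> simp_all
          · cases h : tm (m + M + 2) <;> simp_all

def enc (a b : Bool) : Fin 3 := if a = b then 0 else if a then 1 else 2

def g (n : ℕ) : ℤ := cond (tm n) 1 0

lemma step_eq (a b a' b' : Bool) (h : enc a b = enc a' b') :
    (cond b 1 0 : ℤ) - cond a 1 0 = cond b' 1 0 - cond a' 1 0 := by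
  revert h; revert a b a' b'; decide

set_option maxHeartbeats 1000000 in
/-- There is a squarefree infinite word on a three-letter alphabet. -/
theorem stmt_8 :
    ∃ w : ℕ → Fin 3, ∀ u : List (Fin 3), u ≠ [] → ∀ i : ℕ, ¬ FactorAt w (u ++ u) i := by
  refine ⟨fun n => enc (tm n) (tm (n + 1)), fun u hu i hF => ?_⟩
  set w : ℕ → Fin 3 := fun n => enc (tm n) (tm (n + 1)) with hwdef
  set L := u.length with hLdef
  have hL1 : 1 ≤ L := List.length_pos_iff.mpr hu
  have hlen : (u ++ u).length = L + L := by simp [hLdef]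
  unfold FactorAt at hF
  -- extract entries
  have hget : ∀ k, k < L + L → some (w (i + k)) = (u ++ u)[k]? := by
    intro k hk
    have h1 : ((List.range (u ++ u).length).map (fun k => w (i + k)))[k]? = (u ++ u)[k]? := by
      rw [hF]
    rw [List.getElem?_map, List.getElem?_range (by omega)] at h1
    simpa using h1
  have hw : ∀ k, k < L → w (i + k) = w (i + L + k) := by
    intro k hk
    have h1 := hget k (by omega)
    have h2 := hget (L + k) (by omega)
    rw [List.getElem?_append_left (by omega)] at h1
    rw [List.getElem?_append_right (by omega)] at h2
    rw [show L + k - u.length = k by omega] at h2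
    rw [show i + (L + k) = i + L + k by ring] at h2
    exact Option.some.inj (h1.trans h2.symm)
  -- telescoping
  have key : ∀ k, k ≤ L → g (i + L + k) - g (i + k) = g (i + L) - g i := by
    intro k hk
    induction k with
    | zero => simp
    | succ k ih =>
      have ih' := ih (by omega)
      have hs := step_eq (tm (i + k)) (tm (i + k + 1)) (tm (i + L + k)) (tm (i + L + k + 1))
        (by have := hw k (by omega); simpa [hwdef] using this)
      have e1 : i + (k + 1) = i + k + 1 := by ring
      have e2 : i + L + (k + 1) = i + L + k + 1 := by ring
      rw [e1, e2]
      unfold g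
      unfold g at ih'
      omega
  have h2L := key L le_rfl
  have htm : tm (i + L) = tm i := by
    unfold g at h2L
    cases hA : tm i <;> cases hB : tm (i + L) <;> cases hC : tm (i + L + L) <;>
      simp_all
  have hov : ∀ k ≤ L, tm (i + k) = tm (i + k + L) := by
    intro k hk
    have h := key k hk
    rw [show i + k + L = i + L + k by ring]
    unfold g at h
    cases hA : tm (i + k) <;> cases hB : tm (i + L + k) <;> simp_all
  exact no_overlap L hL1 i hov
end

section
/- In any semigroup satisfying both x^2 = x^4 and x^2 y^2 z = x^2 y x^2 y z for all x,y,z, we have x^2 y^{a} z = x^2 y^{b} z whenever a, b ≥ 3 and a ≡ b (mod 2). -/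
lemma spow_add {S : Type*} [Semigroup S] (s : S) (m n : ℕ) :
    spow s (m + n + 1) = spow s m * spow s n := by
  induction n with
  | zero => rfl
  | succ k ih =>
    show spow s (m + k + 1) * s = spow s m * (spow s k * s)
    rw [ih, mul_assoc]

lemma spow_step {S : Type*} [Semigroup S] (h1 : ∀ x : S, x * x = x * x * x * x)
    (y : S) (n : ℕ) : spow y (n + 2) = spow y (n + 4) := by
  have h13 : spow y 1 = spow y 3 := by
    show y * y = y * y * y * y
    exact h1 y
  have e1 : spow y (n + 2) = spow y 1 * spow y n := by rw [show n + 2 = 1 + n + 1 by ring]; exact spow_add y 1 n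
  have e2 : spow y (n + 4) = spow y 3 * spow y n := by rw [show n + 4 = 3 + n + 1 by ring]; exact spow_add y 3 n
  rw [e1, e2, h13]

lemma spow_even {S : Type*} [Semigroup S] (h1 : ∀ x : S, x * x = x * x * x * x)
    (y : S) (n k : ℕ) : spow y (n + 2) = spow y (n + 2 + 2 * k) := by
  induction k with
  | zero => rfl
  | succ m ih =>
    rw [ih]
    have : n + 2 + 2 * (m + 1) = (n + 2 * m) + 4 := by ring
    rw [this, ← spow_step h1]
    congr 1
    ring

/-- x^2 y^a z = x^2 y^b z whenever a, b ≥ 3 and a ≡ b (mod 2). -/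
theorem stmt_10 {S : Type*} [Semigroup S]
    (h1 : ∀ x : S, x * x = x * x * x * x)
    (h2 : ∀ x y z : S, x * x * (y * y) * z = x * x * y * (x * x) * y * z) :
    ∀ (x y z : S) (a b : ℕ), 3 ≤ a → 3 ≤ b → a % 2 = b % 2 →
      x * x * spow y (a - 1) * z = x * x * spow y (b - 1) * z := by
  intro x y z a b ha hb hab
  suffices h : spow y (a - 1) = spow y (b - 1) by rw [h]
  rcases le_total a b with h | h
  · obtain ⟨k, hk⟩ : ∃ k, b - 1 = (a - 3) + 2 + 2 * k := ⟨(b - a) / 2, by omega⟩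
    have ha' : a - 1 = (a - 3) + 2 := by omega
    rw [ha', hk]
    exact spow_even h1 y (a - 3) k
  · obtain ⟨k, hk⟩ : ∃ k, a - 1 = (b - 3) + 2 + 2 * k := ⟨(a - b) / 2, by omega⟩
    have hb' : b - 1 = (b - 3) + 2 := by omega
    rw [hb', hk]
    exact (spow_even h1 y (b - 3) k).symm
end
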